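/- Let 0 denote the empty specialization, with p_k(0) = 0 for all k ≥ 1, so that h_0(0) = 1 and h_k(0) = 0 for all k ≠ 0. Then for every partition λ, o_λ(0) = (−1)^{|λ|/2} if λ ∈ B (in which case |λ| is even), and o_λ(0) = 0 if λ ∉ B. -/

import Mathlib

open scoped BigOperators
open Filter

/-- An integer partition: a weakly decreasing sequence of naturals, eventually zero.
`f i` is the `(i+1)`-st part `λ_{i+1}` (zero-indexed); parts beyond the length are `0`. -/
structure Partn where
  f : ℕ → ℕ
  antitone : ∀ ⦃i j : ℕ⦄, i ≤ j → f j ≤ f i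
  finsupp : ∃ N, ∀ i, N ≤ i → f i = 0

namespace Partn

/-- The length `ℓ(λ)`: the number of nonzero parts. -/
noncomputable def len (lam : Partn) : ℕ := sInf {N | lam.f N = 0}

/-- The size `|λ|`. -/
noncomputable def size (lam : Partn) : ℕ := ∑ i ∈ Finset.range lam.len, lam.f i

/-- The conjugate partition: `conj lam i = λ'_{i+1} = #{j : λ_j ≥ i+1}` (zero-indexed). -/
noncomputable def conj (lam : Partn) (i : ℕ) : ℕ :=
  ((Finset.range lam.len).filter fun j => i < lam.f j).card

/-- The Frobenius rank `d(λ) = #{i ≥ 1 : λ_i ≥ i}`. -/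
noncomputable def frobDiag (lam : Partn) : ℕ :=
  ((Finset.range lam.len).filter fun i => i < lam.f i).card

/-- Membership in the set `A`: Frobenius coordinates `(a₁,…,a_d | a₁+1,…,a_d+1)`,
i.e. `λ'_i = λ_i + 1` for `1 ≤ i ≤ d(λ)`. -/
def InA (lam : Partn) : Prop := ∀ i < lam.frobDiag, lam.conj i = lam.f i + 1

/-- Membership in the set `B`: Frobenius coordinates `(b₁+1,…,b_d+1 | b₁,…,b_d)`,
i.e. `λ_i = λ'_i + 1` for `1 ≤ i ≤ d(λ)`. -/
def InB (lam : Partn) : Prop := ∀ i < lam.frobDiag, lam.f i = lam.conj i + 1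

/-- The cells of the Young diagram of `λ` (zero-indexed): `(i,j)` with `j < λ_{i+1}`. -/
noncomputable def cells (lam : Partn) : Finset (ℕ × ℕ) :=
  (Finset.range lam.len ×ˢ Finset.range (lam.f 0)).filter fun p => p.2 < lam.f p.1

/-- `dim λ`: the number of standard Young tableaux of shape `λ`, i.e. fillings of the
diagram with `1, …, |λ|`, each used exactly once, strictly increasing along rows and columns. -/
noncomputable def dim (lam : Partn) : ℕ :=
  Nat.card {T : ℕ × ℕ → ℕ //
    Set.BijOn T (lam.cells : Set (ℕ × ℕ)) (Set.Icc 1 lam.size) ∧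
    (∀ p, p ∉ lam.cells → T p = 0) ∧
    (∀ i j j', (i, j) ∈ lam.cells → (i, j') ∈ lam.cells → j < j' → T (i, j) < T (i, j')) ∧
    (∀ i i' j, (i, j) ∈ lam.cells → (i', j) ∈ lam.cells → i < i' → T (i, j) < T (i', j))}

end Partn

/-- The complete homogeneous coefficients `h_n(ρ)` of a specialization `ρ` given by its
power sums `p : ℕ → ℂ` (only `p k`, `k ≥ 1`, is used): the coefficients of
`H(ρ;z) = exp (∑_{k ≥ 1} p_k z^k / k) = ∑_{n ≥ 0} h_n z^n`, characterized by `h_0 = 1` and the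
Newton-type recursion `(n+1)·h_{n+1} = ∑_{k=0}^{n} p_{k+1} h_{n-k}`. -/
noncomputable def hcf (p : ℕ → ℂ) : ℕ → ℂ
  | 0 => 1
  | n + 1 => ((n : ℂ) + 1)⁻¹ * ∑ k ∈ Finset.range (n + 1), p (k + 1) * hcf p (n - k)
decreasing_by exact Nat.lt_succ_of_le (Nat.sub_le n k)

/-- `h_k(ρ)` for integer `k`, with `h_k = 0` for `k < 0`. -/
noncomputable def hz (p : ℕ → ℂ) (k : ℤ) : ℂ := if k < 0 then 0 else hcf p k.toNat

/-- The Schur function `s_λ(ρ) = det[h_{λ_i - i + j}]_{1 ≤ i,j ≤ ℓ(λ)}`. -/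
noncomputable def schur (p : ℕ → ℂ) (lam : Partn) : ℂ :=
  Matrix.det (Matrix.of fun i j : Fin lam.len =>
    hz p ((lam.f i.val : ℤ) - (i.val : ℤ) + (j.val : ℤ)))

/-- The (lifted) symplectic character
`sp_λ(ρ) = (1/2)·det[h_{λ_i - i + j} + h_{λ_i - i - j + 2}]_{1 ≤ i,j ≤ ℓ(λ)}`, equal to 1 for
the empty partition.  (Zero-indexed, the second entry index is `λ_i - i - j`.) -/
noncomputable def spChar (p : ℕ → ℂ) (lam : Partn) : ℂ :=
  if lam.len = 0 then 1 else
    (1 / 2 : ℂ) * Matrix.det (Matrix.of fun i j : Fin lam.len =>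
      hz p ((lam.f i.val : ℤ) - (i.val : ℤ) + (j.val : ℤ)) +
      hz p ((lam.f i.val : ℤ) - (i.val : ℤ) - (j.val : ℤ)))

/-- The (lifted) orthogonal character
`o_λ(ρ) = det[h_{λ_i - i + j} - h_{λ_i - i - j}]_{1 ≤ i,j ≤ ℓ(λ)}`, equal to 1 for
the empty partition. (Zero-indexed, the second entry index is `λ_i - i - j - 2`.) -/
noncomputable def oChar (p : ℕ → ℂ) (lam : Partn) : ℂ :=
  Matrix.det (Matrix.of fun i j : Fin lam.len =>
    hz p ((lam.f i.val : ℤ) - (i.val : ℤ) + (j.val : ℤ)) -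
    hz p ((lam.f i.val : ℤ) - (i.val : ℤ) - (j.val : ℤ) - 2))

/-- `H(ρ; z) = exp (∑_{k ≥ 1} p_k(ρ) z^k / k)`. -/
noncomputable def Hfun (p : ℕ → ℂ) (z : ℂ) : ℂ :=
  Complex.exp (∑' k : ℕ, p (k + 1) * z ^ (k + 1) / ((k : ℂ) + 1))

/-- `F(z) = H(ρ⁺;z) / (H(ρ⁻;z) H(ρ⁻;1/z))`. -/
noncomputable def Ffun (pp pm : ℕ → ℂ) (z : ℂ) : ℂ :=
  Hfun pp z / (Hfun pm z * Hfun pm z⁻¹)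

/-- `Z_sp = exp ∑_{k ≥ 1} ( p_k(ρ⁺)p_k(ρ⁻)/k + p_{2k}(ρ⁻)/(2k) − p_k(ρ⁻)²/(2k) )`. -/
noncomputable def Zsp (pp pm : ℕ → ℂ) : ℂ :=
  Complex.exp (∑' k : ℕ,
    (pp (k + 1) * pm (k + 1) / ((k : ℂ) + 1) + pm (2 * (k + 1)) / (2 * ((k : ℂ) + 1))
      - pm (k + 1) ^ 2 / (2 * ((k : ℂ) + 1))))

/-- `Z_o = exp ∑_{k ≥ 1} ( p_k(ρ⁺)p_k(ρ⁻)/k − p_{2k}(ρ⁻)/(2k) − p_k(ρ⁻)²/(2k) )`. -/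
noncomputable def Zo (pp pm : ℕ → ℂ) : ℂ :=
  Complex.exp (∑' k : ℕ,
    (pp (k + 1) * pm (k + 1) / ((k : ℂ) + 1) - pm (2 * (k + 1)) / (2 * ((k : ℂ) + 1))
      - pm (k + 1) ^ 2 / (2 * ((k : ℂ) + 1))))

/-- The symplectic correlation kernel `K_sp(a + 1/2, b + 1/2)` for `a, b ∈ ℤ`
(half-integer points are parametrized as `a + 1/2`, `a ∈ ℤ`), with contour radii `Rz, Rw`:
`K_sp = (2πi)⁻² ∮∮ (F(z)/F(w)) (1−w²)/((1−wz)(1−w/z)) z^{−(a+1/2)−3/2} w^{(b+1/2)−1/2} dz dw`. -/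
noncomputable def Ksp (pp pm : ℕ → ℂ) (Rz Rw : ℝ) (a b : ℤ) : ℂ :=
  ((2 * Real.pi * Complex.I)⁻¹) ^ 2 *
    ∮ z in C(0, Rz), ∮ w in C(0, Rw),
      Ffun pp pm z / Ffun pp pm w * ((1 - w ^ 2) / ((1 - w * z) * (1 - w / z))) *
        z ^ (-a - 2) * w ^ b

/-- The orthogonal correlation kernel `K_o(a + 1/2, b + 1/2)` for `a, b ∈ ℤ`. -/
noncomputable def Ko (pp pm : ℕ → ℂ) (Rz Rw : ℝ) (a b : ℤ) : ℂ :=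
  ((2 * Real.pi * Complex.I)⁻¹) ^ 2 *
    ∮ z in C(0, Rz), ∮ w in C(0, Rw),
      Ffun pp pm z / Ffun pp pm w * ((1 - z ^ 2) / ((1 - w * z) * (1 - w / z))) *
        z ^ (-a - 2) * w ^ b

/-- The Laurent coefficients `f_k = ∑_{j ≥ max(0,−k)} h_{k+j}(ρ⁺) h_j(ρ⁻)` of the symbol
`f(z) = H(ρ⁺;z)·H(ρ⁻;1/z)`. -/
noncomputable def fcoef (pp pm : ℕ → ℂ) (k : ℤ) : ℂ :=
  ∑' j : ℕ, hz pp (k + (j : ℤ)) * hcf pm j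

/-- The symbol `f(z) = H(ρ⁺;z)·H(ρ⁻;1/z)`. -/
noncomputable def symb (pp pm : ℕ → ℂ) (z : ℂ) : ℂ := Hfun pp z * Hfun pm z⁻¹

/-- The Laurent coefficients `f̌_k` of `f̌(z) = 1/f(−z)`, computed on the circle `|z| = R`:
`f̌_k = (2πi)⁻¹ ∮_{|z|=R} f̌(z) z^{−k−1} dz`. -/
noncomputable def fcheck (pp pm : ℕ → ℂ) (R : ℝ) (k : ℤ) : ℂ :=
  (2 * Real.pi * Complex.I)⁻¹ * ∮ z in C(0, R), (symb pp pm (-z))⁻¹ * z ^ (-k - 1)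

/-- The Plancherel specialization `pl_θ`: `p_1 = θ`, `p_k = 0` for `k ≥ 2`. -/
noncomputable def plSpec (θ : ℝ) : ℕ → ℂ := fun k => if k = 1 then (θ : ℂ) else 0

/-- The Airy function `Ai(x) = (1/π)·lim_{T→∞} ∫₀^T cos(t³/3 + xt) dt`. -/
noncomputable def Ai (x : ℝ) : ℝ :=
  (1 / Real.pi) * limUnder Filter.atTop
    (fun T : ℝ => ∫ t in (0 : ℝ)..T, Real.cos (t ^ 3 / 3 + x * t))

/-- The Airy `2→1` kernel `A₊(x,y) = ∫₀^∞ Ai(x+t)Ai(y+t) dt + ∫₀^∞ Ai(x−t)Ai(y+t) dt`. -/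
noncomputable def Aplus (x y : ℝ) : ℝ :=
  (∫ t in Set.Ioi (0 : ℝ), Ai (x + t) * Ai (y + t)) +
    ∫ t in Set.Ioi (0 : ℝ), Ai (x - t) * Ai (y + t)

/-- The dual kernel `A₋(x,y) = ∫₀^∞ Ai(x+t)Ai(y+t) dt − ∫₀^∞ Ai(x−t)Ai(y+t) dt`. -/
noncomputable def Aminus (x y : ℝ) : ℝ :=
  (∫ t in Set.Ioi (0 : ℝ), Ai (x + t) * Ai (y + t)) -
    ∫ t in Set.Ioi (0 : ℝ), Ai (x - t) * Ai (y + t)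

/-- The Airy kernel `K_Ai(x,y) = ∫₀^∞ Ai(x+t)Ai(y+t) dt`. -/
noncomputable def KAiry (x y : ℝ) : ℝ :=
  ∫ t in Set.Ioi (0 : ℝ), Ai (x + t) * Ai (y + t)

/-- The Fredholm determinant `det(1−K)_{L²(s,∞)}
= ∑_{n≥0} ((−1)^n/n!) ∫_{(s,∞)^n} det[K(xᵢ,xⱼ)] dx`. -/
noncomputable def fredholmDet (K : ℝ → ℝ → ℝ) (s : ℝ) : ℝ :=
  ∑' n : ℕ, ((-1 : ℝ) ^ n / (n.factorial : ℝ)) *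
    ∫ x in (Set.univ.pi fun _ : Fin n => Set.Ioi s),
      Matrix.det (Matrix.of fun i j : Fin n => K (x i) (x j))

/-!
At the empty specialization `h_k = δ_{k,0}`, so writing `aᵢ = λᵢ - i - 1` (0-indexed), row `i`
of the matrix defining `o_λ` has at most one nonzero entry, `-sign aᵢ` in column `|aᵢ| - 1`. The
determinant therefore vanishes unless `i ↦ |aᵢ|` is a bijection onto `{1, …, ℓ(λ)}`, and then,
`a` being strictly decreasing, expansion along the last column gives `(-1)^{∑ max(aᵢ, 0)}`.
The nonnegative `aᵢ` are the Frobenius coordinates `αᵢ`, while the absolute values of the negative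
ones form the complement of `{βⱼ + 1}` in `{1, …, ℓ(λ)}`. So the bijection condition says exactly
`{αᵢ} = {βᵢ + 1}`, i.e. `λ ∈ B`, and then `|λ| = ∑ (αᵢ + βᵢ + 1) = 2 ∑ αᵢ`.
-/

open Finset

theorem lt_card_filter_range_iff {p : ℕ → Prop} [DecidablePred p] (hp : Antitone p) {n i : ℕ} :
    i < #{k ∈ range n | p k} ↔ i < n ∧ p i := by
  constructor
  · intro hi
    by_contra hpi
    have hsub : {k ∈ range n | p k} ⊆ range i := by
      intro k hk
      rw [mem_filter, mem_range] at hk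
      rw [mem_range]
      by_contra! hik
      exact hpi ⟨by omega, hp hik hk.2⟩
    simpa using (card_le_card hsub).trans_lt' hi
  · rintro ⟨hin, hpi⟩
    have hsub : range (i + 1) ⊆ {k ∈ range n | p k} := by
      intro k hk
      rw [mem_range] at hk
      exact mem_filter.2 ⟨mem_range.2 (by omega), hp (by omega) hpi⟩
    simpa using card_le_card hsub

theorem eqOn_range_of_image_eq {f g : ℕ → ℤ} (hf : StrictAnti f) (hg : StrictAnti g) {d : ℕ}
    (h : (range d).image f = (range d).image g) : ∀ i < d, f i = g i := by
  have hrange : ∀ φ : ℕ → ℤ, Set.range (φ ∘ Fin.val : Fin d → ℤ) = ↑((range d).image φ) := by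
    intro φ
    ext
    simp [Fin.exists_iff]
  have := (StrictAnti.range_inj (hf.comp_strictMono Fin.val_strictMono)
    (hg.comp_strictMono Fin.val_strictMono)).1 (by rw [hrange, hrange, h])
  exact fun i hi => congrFun this ⟨i, hi⟩

namespace Partn

variable (lam : Partn)

theorem f_len : lam.f lam.len = 0 :=
  Nat.sInf_mem (let ⟨N, hN⟩ := lam.finsupp; ⟨N, hN N le_rfl⟩)

theorem lt_len_iff {i : ℕ} : i < lam.len ↔ 0 < lam.f i := by
  refine ⟨fun h => Nat.pos_of_ne_zero (Nat.notMem_of_lt_sInf (s := {N | lam.f N = 0}) h),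
    fun h => ?_⟩
  by_contra! hi
  have := lam.f_len ▸ lam.antitone hi
  omega

theorem lt_conj_iff {i j : ℕ} : i < lam.conj j ↔ j < lam.f i := by
  rw [conj, lt_card_filter_range_iff fun k i hki h => h.trans_le (lam.antitone hki), lt_len_iff]
  omega

theorem lt_frobDiag_iff {i : ℕ} : i < lam.frobDiag ↔ i < lam.f i := by
  rw [frobDiag, lt_card_filter_range_iff fun k i hki h =>
    hki.trans_lt (h.trans_le (lam.antitone hki)), lt_len_iff]
  omega

theorem lt_frobDiag_iff_lt_conj {i : ℕ} : i < lam.frobDiag ↔ i < lam.conj i :=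
  lam.lt_frobDiag_iff.trans lam.lt_conj_iff.symm

theorem frobDiag_le_len : lam.frobDiag ≤ lam.len :=
  (card_filter_le _ _).trans (card_range _).le

theorem conj_le_len (j : ℕ) : lam.conj j ≤ lam.len :=
  (card_filter_le _ _).trans (card_range _).le

theorem conj_antitone : Antitone lam.conj :=
  fun _ _ h => card_le_card (monotone_filter_right _ fun _ _ hi => h.trans_lt hi)

-- ℕ-subtraction truncates: only the terms with `i < d(λ)` survive, and this is the Frobenius
-- formula `|λ| = ∑ᵢ (αᵢ + βᵢ + 1)`.
theorem size_eq_sum_add_sum : lam.size =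
    ∑ i ∈ range lam.len, (lam.f i - i) + ∑ j ∈ range lam.len, (lam.conj j - (j + 1)) := by
  set n := lam.len
  set r : ℕ → ℕ → Prop := fun i j => j < lam.f i ∧ j < i
  have hrow : ∀ i ∈ range n, min (lam.f i) i = #((range n).bipartiteAbove r i) := by
    intro i hi
    rw [bipartiteAbove, ← card_range (min (lam.f i) i)]
    congr 1
    ext j
    simp only [r, mem_filter, mem_range] at hi ⊢
    omega
  have hcol : ∀ j ∈ range n, #((range n).bipartiteBelow r j) = lam.conj j - (j + 1) := by
    intro j _
    rw [bipartiteBelow, ← Nat.card_Ico]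
    congr 1
    ext i
    have := lam.lt_conj_iff (i := i) (j := j)
    have := lam.lt_len_iff (i := i)
    simp only [r, mem_filter, mem_range, mem_Ico]
    omega
  calc lam.size = ∑ i ∈ range n, (lam.f i - i) + ∑ i ∈ range n, min (lam.f i) i := by
        rw [size, ← sum_add_distrib]
        exact sum_congr rfl fun i _ => by omega
    _ = _ := by
        rw [sum_congr rfl hrow, sum_card_bipartiteAbove_eq_sum_card_bipartiteBelow,
          sum_congr rfl hcol]

theorem size_eq_of_inB (hB : lam.InB) :
    lam.size = 2 * ∑ i ∈ range lam.len, (lam.f i - i - 1) := by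
  rw [size_eq_sum_add_sum, mul_sum, ← sum_add_distrib]
  refine sum_congr rfl fun i _ => ?_
  have := lam.lt_frobDiag_iff (i := i)
  have := lam.lt_frobDiag_iff_lt_conj (i := i)
  by_cases hi : i < lam.frobDiag
  · have := hB i hi
    omega
  · omega

-- For `i < d(λ)`, `shiftedPart i` is the Frobenius coordinate `αᵢ` and `conj i - i` is `βᵢ + 1`.
def shiftedPart (i : ℕ) : ℤ := lam.f i - i - 1

noncomputable def armSet : Finset ℤ := (range lam.frobDiag).image lam.shiftedPart

noncomputable def legSet : Finset ℤ := (range lam.frobDiag).image fun j => (lam.conj j : ℤ) - j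

noncomputable def lowerSet : Finset ℤ :=
  (Ico lam.frobDiag lam.len).image fun i : ℕ => (i : ℤ) + 1 - lam.f i

theorem shiftedPart_strictAnti : StrictAnti lam.shiftedPart := by
  intro i k h
  have := lam.antitone h.le
  simp only [shiftedPart]
  omega

theorem conj_sub_strictAnti : StrictAnti fun j => (lam.conj j : ℤ) - j := by
  intro i k h
  have := lam.conj_antitone h.le
  simp only
  omega

theorem add_one_sub_strictMono : StrictMono fun i : ℕ => (i : ℤ) + 1 - lam.f i := by
  intro i k h
  have := lam.antitone h.le
  simp only
  omega

theorem card_armSet : #lam.armSet = lam.frobDiag := by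
  rw [armSet, card_image_of_injective _ lam.shiftedPart_strictAnti.injective, card_range]

theorem card_legSet : #lam.legSet = lam.frobDiag := by
  rw [legSet, card_image_of_injective _ lam.conj_sub_strictAnti.injective, card_range]

theorem card_lowerSet : #lam.lowerSet = lam.len - lam.frobDiag := by
  rw [lowerSet, card_image_of_injective _ lam.add_one_sub_strictMono.injective, Nat.card_Ico]

theorem legSet_subset : lam.legSet ⊆ Icc 1 (lam.len : ℤ) := by
  intro x hx
  obtain ⟨j, hj, rfl⟩ := mem_image.1 hx
  have := lam.lt_frobDiag_iff_lt_conj.1 (mem_range.1 hj)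
  have := lam.conj_le_len j
  rw [mem_Icc]
  omega

theorem lowerSet_subset : lam.lowerSet ⊆ Icc 1 (lam.len : ℤ) := by
  intro x hx
  obtain ⟨i, hi, rfl⟩ := mem_image.1 hx
  rw [mem_Ico] at hi
  have := lam.lt_frobDiag_iff (i := i)
  have := lam.lt_len_iff.1 hi.2
  rw [mem_Icc]
  omega

theorem disjoint_legSet_lowerSet : Disjoint lam.legSet lam.lowerSet := by
  rw [disjoint_left]
  rintro _ hx hx'
  obtain ⟨j, -, rfl⟩ := mem_image.1 hx
  obtain ⟨i, -, hij⟩ := mem_image.1 hx'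
  have := lam.lt_conj_iff (i := i) (j := j)
  omega

-- The classical complementarity of `{βⱼ + 1}` and `{i + 1 - λᵢ}` (Macdonald, I.(1.7)).
theorem legSet_union_lowerSet : lam.legSet ∪ lam.lowerSet = Icc 1 (lam.len : ℤ) := by
  refine eq_of_subset_of_card_le (union_subset lam.legSet_subset lam.lowerSet_subset) ?_
  rw [card_union_of_disjoint lam.disjoint_legSet_lowerSet, card_legSet, card_lowerSet,
    Int.card_Icc]
  have := lam.frobDiag_le_len
  omega

theorem image_abs_shiftedPart :
    (range lam.len).image (fun i => |lam.shiftedPart i|) = lam.armSet ∪ lam.lowerSet := by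
  rw [range_eq_Ico, ← Ico_union_Ico_eq_Ico (Nat.zero_le _) lam.frobDiag_le_len, image_union,
    ← range_eq_Ico, armSet, lowerSet]
  congr 1 <;> refine image_congr fun i hi => ?_ <;> have := lam.lt_frobDiag_iff (i := i)
  · rw [coe_range, Set.mem_Iio] at hi
    exact abs_of_nonneg (by simp only [shiftedPart]; omega)
  · rw [coe_Ico, Set.mem_Ico] at hi
    rw [abs_of_neg (by simp only [shiftedPart]; omega), shiftedPart]
    ring

theorem inB_iff_armSet_eq_legSet : lam.InB ↔ lam.armSet = lam.legSet := by
  constructor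
  · intro hB
    refine image_congr fun i hi => ?_
    have := hB i (mem_range.1 hi)
    simp only [shiftedPart]
    omega
  · intro h i hi
    have := eqOn_range_of_image_eq lam.shiftedPart_strictAnti lam.conj_sub_strictAnti h i hi
    simp only [shiftedPart] at this
    omega

theorem inB_iff_image_abs_shiftedPart :
    lam.InB ↔ univ.image (fun i : Fin lam.len => |lam.shiftedPart i|) = Icc 1 (lam.len : ℤ) := by
  have himage : univ.image (fun i : Fin lam.len => |lam.shiftedPart i|) =
      (range lam.len).image fun i => |lam.shiftedPart i| := by
    rw [← image_fin_univ, image_image]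
    rfl
  rw [himage, image_abs_shiftedPart, ← legSet_union_lowerSet, inB_iff_armSet_eq_legSet]
  refine ⟨fun h => h ▸ rfl, fun h => ?_⟩
  have hsub : lam.legSet ⊆ lam.armSet := fun x hx =>
    (mem_union.1 (h ▸ mem_union_left _ hx)).resolve_right
      (disjoint_left.1 lam.disjoint_legSet_lowerSet hx)
  exact (eq_of_subset_of_card_le hsub (by rw [card_armSet, card_legSet])).symm

theorem sum_toNat_shiftedPart :
    ∑ i : Fin lam.len, (lam.shiftedPart i).toNat = ∑ i ∈ range lam.len, (lam.f i - i - 1) := by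
  rw [Fin.sum_univ_eq_sum_range (fun i => (lam.shiftedPart i).toNat)]
  exact sum_congr rfl fun i _ => by simp only [shiftedPart]; omega

end Partn

def signedAbsMatrix (R : Type*) [Ring R] {n : ℕ} (a : Fin n → ℤ) : Matrix (Fin n) (Fin n) R :=
  Matrix.of fun i j => (if a i = -(j + 1) then 1 else 0) - (if a i = j + 1 then 1 else 0)

section signedAbsMatrix

variable {R : Type*} [CommRing R] {n : ℕ}

theorem signedAbsMatrix_apply_eq_zero {a : Fin n → ℤ} {i j : Fin n} (h : |a i| ≠ j + 1) :
    signedAbsMatrix R a i j = 0 := by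
  have h' := abs_eq (a := a i) (b := (j : ℤ) + 1) (by omega)
  simp only [signedAbsMatrix, Matrix.of_apply]
  rw [if_neg (by tauto), if_neg (by tauto), sub_zero]

theorem det_signedAbsMatrix_eq_zero {a : Fin n → ℤ}
    (h : univ.image (fun i => |a i|) ≠ Icc 1 (n : ℤ)) : (signedAbsMatrix R a).det = 0 := by
  obtain ⟨k, hk, hka⟩ : ∃ k ∈ Icc 1 (n : ℤ), k ∉ univ.image (fun i => |a i|) := by
    by_contra! hsub
    refine h (eq_of_subset_of_card_le hsub ?_).symm
    rw [Int.card_Icc]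
    simpa using card_image_le (s := (univ : Finset (Fin n))) (f := fun i => |a i|)
  rw [mem_Icc] at hk
  refine Matrix.det_eq_zero_of_column_eq_zero ⟨k.toNat - 1, by omega⟩ fun i => ?_
  refine signedAbsMatrix_apply_eq_zero fun hi => hka (mem_image.2 ⟨i, mem_univ _, ?_⟩)
  simp only at hi
  omega

theorem injective_of_image_univ_eq_Icc {f : Fin n → ℤ} (h : univ.image f = Icc 1 (n : ℤ)) :
    Function.Injective f := by
  rw [← Set.injOn_univ, ← coe_univ, ← card_image_iff, h]
  simp

theorem image_comp_succAbove_eq_Icc {f : Fin (n + 1) → ℤ}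
    (h : univ.image f = Icc 1 ((n + 1 : ℕ) : ℤ)) {p : Fin (n + 1)} (hp : f p = n + 1) :
    univ.image (f ∘ p.succAbove) = Icc 1 (n : ℤ) := by
  have hinj := injective_of_image_univ_eq_Icc h
  refine eq_of_subset_of_card_le (fun x hx => ?_) ?_
  · obtain ⟨k, -, rfl⟩ := mem_image.1 hx
    have hmem := mem_Icc.1 (h ▸ mem_image_of_mem f (mem_univ (p.succAbove k)))
    have hne : f (p.succAbove k) ≠ f p := hinj.ne (p.succAbove_ne k)
    rw [mem_Icc, Function.comp_apply]
    push_cast at hmem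
    omega
  · rw [card_image_of_injective _ (hinj.comp Fin.succAbove_right_injective), Int.card_Icc]
    simp

-- Expanding along the last column: the entry with `|a p| = n + 1` sits in the first row if
-- `a p > 0` and in the last row if `a p < 0`, as `a` is strictly decreasing with `|a| ≤ n + 1`.
theorem det_signedAbsMatrix {a : Fin n → ℤ} (ha : StrictAnti a)
    (h : univ.image (fun i => |a i|) = Icc 1 (n : ℤ)) :
    (signedAbsMatrix R a).det = (-1) ^ ∑ i, (a i).toNat := by
  induction n with
  | zero => simp
  | succ n ih =>
    have hbound : ∀ i, |a i| ≤ n + 1 := fun i => by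
      simpa using (mem_Icc.1 (h ▸ mem_image_of_mem (fun i => |a i|) (mem_univ i))).2
    obtain ⟨p, -, hp⟩ := mem_image.1 (h ▸ right_mem_Icc.2 (by omega) : ((n + 1 : ℕ) : ℤ) ∈ _)
    push_cast at hp
    have hcol : ∀ i ≠ p, signedAbsMatrix R a i (Fin.last n) = 0 := fun i hi =>
      signedAbsMatrix_apply_eq_zero fun hi' =>
        hi (injective_of_image_univ_eq_Icc h (hi'.trans (by simpa using hp.symm)))
    have hminor : (signedAbsMatrix R a).submatrix p.succAbove (Fin.last n).succAbove =
        signedAbsMatrix R (a ∘ p.succAbove) := by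
      ext
      simp [signedAbsMatrix, Fin.succAbove_last]
    rw [Matrix.det_succ_column _ (Fin.last n),
      sum_eq_single p (fun i _ hi => by rw [hcol i hi, mul_zero, zero_mul]) (by simp), hminor,
      ih (ha.comp_strictMono (Fin.strictMono_succAbove p)) (image_comp_succAbove_eq_Icc h hp),
      Fin.sum_univ_succAbove _ p]
    rcases abs_cases (a p) with ⟨hap, -⟩ | ⟨hap, -⟩
    · obtain rfl : p = 0 := by
        by_contra hp0
        have := ha (Fin.pos_of_ne_zero hp0)
        have := abs_le.1 (hbound 0)
        omega
      have hentry : signedAbsMatrix R a 0 (Fin.last n) = -1 := by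
        simp only [signedAbsMatrix, Matrix.of_apply, Fin.val_last]
        rw [if_neg (by omega), if_pos (by omega), zero_sub]
      rw [hentry, show (a 0).toNat = n + 1 by omega, Fin.val_zero, Fin.val_last,
        Function.comp_def]
      ring
    · obtain rfl : p = Fin.last n := by
        by_contra hpl
        have := ha (Fin.lt_last_iff_ne_last.2 hpl)
        have := abs_le.1 (hbound (Fin.last n))
        omega
      have hentry : signedAbsMatrix R a (Fin.last n) (Fin.last n) = 1 := by
        simp only [signedAbsMatrix, Matrix.of_apply, Fin.val_last]
        rw [if_pos (by omega), if_neg (by omega), sub_zero]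
      rw [hentry, show (a (Fin.last n)).toNat = 0 by omega, Fin.val_last, ← two_mul, pow_mul]
      simp

end signedAbsMatrix

theorem hcf_const_zero (m : ℕ) : hcf (fun _ => 0) m = if m = 0 then 1 else 0 := by
  cases m <;> simp [hcf]

theorem hz_const_zero (k : ℤ) : hz (fun _ => 0) k = if k = 0 then 1 else 0 := by
  rw [hz, hcf_const_zero]
  split_ifs <;> first | rfl | omega

theorem Partn.oChar_const_zero (lam : Partn) :
    oChar (fun _ => 0) lam = (signedAbsMatrix ℂ fun i : Fin lam.len => lam.shiftedPart i).det := by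
  rw [oChar]
  congr 1
  ext i j
  simp only [Matrix.of_apply, signedAbsMatrix, hz_const_zero, shiftedPart]
  congr 1 <;> exact if_congr (by omega) rfl rfl

/-- At the empty specialization (`p_k = 0` for all `k`), `o_λ(0) = (−1)^{|λ|/2}` for
`λ ∈ B` (and `|λ|` is then even), and `o_λ(0) = 0` otherwise. -/
theorem o_at_empty_specialization (lam : Partn) :
    (lam.InB → Even lam.size ∧ oChar (fun _ => 0) lam = (-1 : ℂ) ^ (lam.size / 2)) ∧
    (¬ lam.InB → oChar (fun _ => 0) lam = 0) := by
  rw [lam.oChar_const_zero]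
  refine ⟨fun hB => ?_, fun hB =>
    det_signedAbsMatrix_eq_zero (mt lam.inB_iff_image_abs_shiftedPart.2 hB)⟩
  rw [det_signedAbsMatrix (fun _ _ h => lam.shiftedPart_strictAnti h)
      (lam.inB_iff_image_abs_shiftedPart.1 hB),
    lam.sum_toNat_shiftedPart, lam.size_eq_of_inB hB, Nat.mul_div_cancel_left _ two_pos]
  exact ⟨even_two_mul _, rfl⟩
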